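/- For each permutation σ ∈ S_N and each choice of positive masses, the function W = U + I has exactly one critical point in the component Ω_σ, and this critical point is the unique global minimum of W on Ω_σ. -/

import Mathlib

open Finset

noncomputable def Upot {N : ℕ} (m : Fin N → ℝ) (x : Fin N → ℝ) : ℝ :=
  ∑ i, ∑ j ∈ Finset.Ioi i, m i * m j / |x i - x j|

noncomputable def inertia {N : ℕ} (m : Fin N → ℝ) (x : Fin N → ℝ) : ℝ :=
  ∑ i, m i * x i ^ 2

/-!
On `Ω_σ` the sign of each `x i - x j` is fixed, so `m i * m j / |x i - x j|` is a nonnegative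
multiple of the reciprocal of a positive linear form, hence convex; `I` is a positive definite
quadratic form, so `W = U + I` is strictly convex on the convex open set `Ω_σ`. A critical point of
such a function is its unique global minimiser. A minimiser exists because each sublevel set of `W`
in `Ω_σ` lies in a compact subset of `Ω_σ`: `U` keeps the bodies apart and `I` keeps them bounded.
-/

section Convexity

variable {𝕜 E β ι : Type*} [Semiring 𝕜] [PartialOrder 𝕜] [AddCommMonoid E]
  [AddCommMonoid β] [PartialOrder β] [IsOrderedAddMonoid β] [SMul 𝕜 E] [Module 𝕜 β]
  {s : Set E}

theorem convexOn_finset_sum {t : Finset ι} {f : ι → E → β} (hs : Convex 𝕜 s)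
    (hf : ∀ i ∈ t, ConvexOn 𝕜 s (f i)) : ConvexOn 𝕜 s fun x => ∑ i ∈ t, f i x := by
  classical
  induction t using Finset.induction_on with
  | empty => simpa using convexOn_const (0 : β) hs
  | insert a t hat ih =>
    simp_rw [Finset.sum_insert hat]
    exact (hf a (mem_insert_self a t)).add (ih fun i hi => hf i (mem_insert_of_mem hi))

end Convexity

theorem StrictConvexOn.const_mul {E : Type*} [AddCommMonoid E] [Module ℝ E] {s : Set E}
    {f : E → ℝ} {c : ℝ} (hc : 0 < c) (hf : StrictConvexOn ℝ s f) :
    StrictConvexOn ℝ s fun x => c * f x := by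
  refine ⟨hf.1, fun x hx y hy hxy a b ha hb hab => ?_⟩
  have := mul_lt_mul_of_pos_left (hf.2 hx hy hxy ha hb hab) hc
  simp only [smul_eq_mul] at this ⊢
  linarith

theorem strictConvexOn_univ_sum_apply {ι : Type*} [Fintype ι] {f : ι → ℝ → ℝ}
    (hf : ∀ i, StrictConvexOn ℝ Set.univ (f i)) :
    StrictConvexOn ℝ Set.univ fun x : ι → ℝ => ∑ i, f i (x i) := by
  refine ⟨convex_univ, fun x _ y _ hxy a b ha hb hab => ?_⟩
  obtain ⟨k, hk⟩ := Function.ne_iff.mp hxy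
  simp only [smul_eq_mul, Finset.mul_sum, ← Finset.sum_add_distrib]
  refine Finset.sum_lt_sum (fun i _ => ?_) ⟨k, mem_univ k, ?_⟩
  · exact (hf i).convexOn.2 trivial trivial ha.le hb.le hab
  · exact (hf k).2 trivial trivial hk ha hb hab

theorem ConvexOn.isMinOn_of_hasFDerivAt_eq_zero {E : Type*} [NormedAddCommGroup E]
    [NormedSpace ℝ E] {s : Set E} {f : E → ℝ} {x : E} (hf : ConvexOn ℝ s f) (hx : x ∈ s)
    (hf' : HasFDerivAt f (0 : E →L[ℝ] ℝ) x) : IsMinOn f s x := by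
  intro y hy
  have hseg : ConvexOn ℝ (Set.Icc 0 1) (f ∘ AffineMap.lineMap (k := ℝ) x y) :=
    (hf.comp_affineMap _).subset (fun t ht => hf.1.lineMap_mem hx hy ht) (convex_Icc 0 1)
  have hderiv : HasDerivAt (f ∘ AffineMap.lineMap (k := ℝ) x y) 0 0 := by
    have := (AffineMap.lineMap_apply_zero (k := ℝ) x y ▸ hf').comp_hasDerivAt (0 : ℝ)
      AffineMap.hasDerivAt_lineMap
    simpa using this
  have := hseg.le_slope_of_hasDerivAt (by simp) (by simp) zero_lt_one hderiv
  simpa [slope_def_field] using this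

theorem StrictConvexOn.lt_of_isMinOn {E : Type*} [AddCommMonoid E] [Module ℝ E] {s : Set E}
    {f : E → ℝ} {x y : E} (hf : StrictConvexOn ℝ s f) (hmin : IsMinOn f s x) (hx : x ∈ s)
    (hy : y ∈ s) (hne : y ≠ x) : f x < f y :=
  (hmin hy).lt_of_ne fun h => hne <| hf.eq_of_isMinOn (fun _ hz => h ▸ hmin hz) hmin hy hx

theorem exists_isMinOn_of_isCompact_sublevel {E β : Type*} [TopologicalSpace E] [LinearOrder β]
    [TopologicalSpace β] [ClosedIicTopology β] {f : E → β} {s K : Set E} {x₀ : E}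
    (hK : IsCompact K) (hKs : K ⊆ s) (hf : ContinuousOn f K) (hx₀ : x₀ ∈ s)
    (hsub : ∀ x ∈ s, f x ≤ f x₀ → x ∈ K) : ∃ c ∈ s, IsMinOn f s c := by
  obtain ⟨c, hcK, hc⟩ := hK.exists_isMinOn ⟨x₀, hsub x₀ hx₀ le_rfl⟩ hf
  refine ⟨c, hKs hcK, fun x hx => ?_⟩
  by_cases hxK : x ∈ K
  · exact hc hxK
  · exact (hc (hsub x₀ hx₀ le_rfl)).trans (not_le.mp (mt (hsub x hx) hxK)).le

/-- The component `Ω_σ`. -/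
def chamber {N : ℕ} (σ : Equiv.Perm (Fin N)) : Set (Fin N → ℝ) := {x | StrictMono (x ∘ σ)}

section Configurations

variable {N : ℕ} {m : Fin N → ℝ} {σ : Equiv.Perm (Fin N)} {x : Fin N → ℝ}

theorem chamber_eq_iInter (σ : Equiv.Perm (Fin N)) :
    chamber σ = ⋂ (i) (j) (_ : i < j), {x : Fin N → ℝ | x (σ i) - x (σ j) < 0} := by
  ext x; simp [chamber, StrictMono]

theorem convex_chamber (σ : Equiv.Perm (Fin N)) : Convex ℝ (chamber σ) := by
  rw [chamber_eq_iInter]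
  refine convex_iInter fun i => convex_iInter fun j => convex_iInter fun _ => ?_
  exact convex_halfSpace_lt
    (LinearMap.proj (R := ℝ) (φ := fun _ : Fin N => ℝ) (σ i) - LinearMap.proj (σ j)).isLinear 0

theorem isOpen_chamber (σ : Equiv.Perm (Fin N)) : IsOpen (chamber σ) := by
  rw [chamber_eq_iInter]
  refine isOpen_iInter_of_finite fun i => isOpen_iInter_of_finite fun j =>
    isOpen_iInter_of_finite fun _ => ?_
  exact isOpen_lt (by fun_prop) continuous_const

theorem apply_lt_of_mem_chamber (hx : x ∈ chamber σ) {i j : Fin N} (hij : σ.symm i < σ.symm j) :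
    x i < x j := by
  simpa using hx hij

theorem injective_of_mem_chamber (hx : x ∈ chamber σ) : Function.Injective x := by
  simpa [Function.comp_def] using StrictMono.injective hx |>.comp σ.symm.injective

theorem convexOn_chamber_div_abs_sub {c : ℝ} (hc : 0 ≤ c) {i j : Fin N} (hij : i ≠ j) :
    ConvexOn ℝ (chamber σ) fun x => c / |x i - x j| := by
  wlog h : σ.symm i < σ.symm j generalizing i j
  · simpa only [abs_sub_comm] using
      this hij.symm ((not_lt.mp h).lt_of_ne (σ.symm.injective.ne hij.symm))
  let g : (Fin N → ℝ) →ₗ[ℝ] ℝ :=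
    LinearMap.proj (R := ℝ) (φ := fun _ : Fin N => ℝ) j - LinearMap.proj i
  have hg : chamber σ ⊆ g ⁻¹' Set.Ioi 0 := fun x hx => by
    simpa [g] using apply_lt_of_mem_chamber hx h
  refine (((convexOn_zpow (-1)).smul hc).comp_linearMap g).subset hg (convex_chamber σ)
    |>.congr fun x hx => ?_
  simp [g, abs_of_neg (sub_neg.mpr (apply_lt_of_mem_chamber hx h)), div_eq_mul_inv]

theorem convexOn_upot (hm : ∀ i, 0 ≤ m i) (σ : Equiv.Perm (Fin N)) :
    ConvexOn ℝ (chamber σ) (Upot m) :=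
  convexOn_finset_sum (convex_chamber σ) fun i _ =>
    convexOn_finset_sum (convex_chamber σ) fun j hj =>
      convexOn_chamber_div_abs_sub (mul_nonneg (hm i) (hm j)) (mem_Ioi.mp hj).ne

theorem strictConvexOn_inertia (hm : ∀ i, 0 < m i) :
    StrictConvexOn ℝ Set.univ (inertia m) :=
  strictConvexOn_univ_sum_apply fun i =>
    (Even.strictConvexOn_pow even_two two_ne_zero).const_mul (hm i)

theorem strictConvexOn_upot_add_inertia (hm : ∀ i, 0 < m i) (σ : Equiv.Perm (Fin N)) :
    StrictConvexOn ℝ (chamber σ) fun x => Upot m x + inertia m x :=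
  (convexOn_upot (fun i => (hm i).le) σ).add_strictConvexOn
    ((strictConvexOn_inertia hm).subset (Set.subset_univ _) (convex_chamber σ))

theorem differentiableAt_upot (hx : Function.Injective x) : DifferentiableAt ℝ (Upot m) x := by
  unfold Upot
  refine DifferentiableAt.fun_sum fun i _ => DifferentiableAt.fun_sum fun j hj => ?_
  have hne : x i - x j ≠ 0 := sub_ne_zero.mpr (hx.ne (mem_Ioi.mp hj).ne)
  have hd : DifferentiableAt ℝ (fun z : Fin N → ℝ => |z i - z j|) x :=
    (by fun_prop : DifferentiableAt ℝ (fun z : Fin N → ℝ => z i - z j) x).abs hne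
  fun_prop (disch := exact abs_ne_zero.mpr hne)

theorem differentiable_inertia : Differentiable ℝ (inertia m) := by
  unfold inertia; fun_prop

theorem upot_nonneg (hm : ∀ i, 0 ≤ m i) (x : Fin N → ℝ) : 0 ≤ Upot m x :=
  sum_nonneg fun i _ => sum_nonneg fun j _ => div_nonneg (mul_nonneg (hm i) (hm j)) (abs_nonneg _)

theorem inertia_nonneg (hm : ∀ i, 0 ≤ m i) (x : Fin N → ℝ) : 0 ≤ inertia m x :=
  sum_nonneg fun i _ => mul_nonneg (hm i) (sq_nonneg _)

theorem div_abs_sub_le_upot (hm : ∀ i, 0 ≤ m i) (x : Fin N → ℝ) {i j : Fin N} (hij : i ≠ j) :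
    m i * m j / |x i - x j| ≤ Upot m x := by
  wlog h : i < j generalizing i j
  · simpa only [mul_comm, abs_sub_comm] using this hij.symm ((not_lt.mp h).lt_of_ne hij.symm)
  have hterm : ∀ i, ∀ j ∈ Ioi i, 0 ≤ m i * m j / |x i - x j| := fun i j _ =>
    div_nonneg (mul_nonneg (hm i) (hm j)) (abs_nonneg _)
  calc m i * m j / |x i - x j| ≤ ∑ k ∈ Ioi i, m i * m k / |x i - x k| :=
        single_le_sum (hterm i) (mem_Ioi.mpr h)
    _ ≤ Upot m x := single_le_sum (fun k _ => sum_nonneg (hterm k)) (mem_univ i)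

theorem sq_le_inertia_div (hm : ∀ i, 0 < m i) (x : Fin N → ℝ) (i : Fin N) :
    x i ^ 2 ≤ inertia m x / m i := by
  rw [le_div_iff₀ (hm i), mul_comm]
  exact single_le_sum (fun j _ => mul_nonneg (hm j).le (sq_nonneg _)) (mem_univ i)

theorem isCompact_inertia_le (hm : ∀ i, 0 < m i) (C : ℝ) :
    IsCompact {x : Fin N → ℝ | inertia m x ≤ C} := by
  refine (isCompact_univ_pi fun i => isCompact_closedBall (0 : ℝ) √(C / m i)).of_isClosed_subset
    (isClosed_le (by unfold inertia; fun_prop) continuous_const) fun x hx i _ => ?_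
  rw [Metric.mem_closedBall, dist_zero_right, Real.norm_eq_abs, ← Real.sqrt_sq_eq_abs]
  exact Real.sqrt_le_sqrt
    ((sq_le_inertia_div hm x i).trans (div_le_div_of_nonneg_right hx (hm i).le))

theorem differentiableAt_upot_add_inertia (hx : x ∈ chamber σ) :
    DifferentiableAt ℝ (fun z => Upot m z + inertia m z) x :=
  (differentiableAt_upot (injective_of_mem_chamber hx)).fun_add
    differentiable_inertia.differentiableAt

/-- A compact subset of `Ω_σ` trapping the sublevel set `{U + I ≤ C}` of `Ω_σ`: the gap bound
comes from `m i * m j / |x i - x j| ≤ U x`, the boundedness from `I x ≤ C`. -/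
def separatedSublevel (m : Fin N → ℝ) (σ : Equiv.Perm (Fin N)) (C : ℝ) : Set (Fin N → ℝ) :=
  {x | (∀ i j, i < j → m (σ i) * m (σ j) ≤ C * (x (σ j) - x (σ i))) ∧ inertia m x ≤ C}

theorem isCompact_separatedSublevel (hm : ∀ i, 0 < m i) (σ : Equiv.Perm (Fin N)) (C : ℝ) :
    IsCompact (separatedSublevel m σ C) := by
  have hgaps : IsClosed
      {x : Fin N → ℝ | ∀ i j, i < j → m (σ i) * m (σ j) ≤ C * (x (σ j) - x (σ i))} := by
    simp only [Set.ofPred_forall]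
    exact isClosed_iInter fun i => isClosed_iInter fun j => isClosed_iInter fun _ =>
      isClosed_le continuous_const (by fun_prop)
  exact (isCompact_inertia_le hm C).inter_left hgaps

theorem separatedSublevel_subset_chamber (hm : ∀ i, 0 < m i) {C : ℝ} (hC : 0 ≤ C) :
    separatedSublevel m σ C ⊆ chamber σ := fun _ hx i j hij =>
  sub_pos.mp <| pos_of_mul_pos_right ((mul_pos (hm _) (hm _)).trans_le (hx.1 i j hij)) hC

theorem mem_separatedSublevel (hm : ∀ i, 0 ≤ m i) (hx : x ∈ chamber σ) {C : ℝ}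
    (hC : Upot m x + inertia m x ≤ C) : x ∈ separatedSublevel m σ C := by
  have hU : Upot m x ≤ C := by linarith [inertia_nonneg hm x]
  refine ⟨fun i j hij => ?_, by linarith [upot_nonneg hm x]⟩
  have hgap : 0 < x (σ j) - x (σ i) := sub_pos.mpr (hx hij)
  have hpair := div_abs_sub_le_upot hm x (σ.injective.ne hij.ne)
  rw [abs_sub_comm, abs_of_pos hgap, div_le_iff₀ hgap] at hpair
  exact hpair.trans (mul_le_mul_of_nonneg_right hU hgap.le)

theorem exists_isMinOn_upot_add_inertia (hm : ∀ i, 0 < m i) (σ : Equiv.Perm (Fin N)) :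
    ∃ c ∈ chamber σ, IsMinOn (fun z => Upot m z + inertia m z) (chamber σ) c := by
  let x₀ : Fin N → ℝ := fun i => (σ.symm i : ℕ)
  have hx₀ : x₀ ∈ chamber σ := fun a b hab => by simpa [x₀] using hab
  have hC : 0 ≤ Upot m x₀ + inertia m x₀ :=
    add_nonneg (upot_nonneg (fun i => (hm i).le) x₀) (inertia_nonneg (fun i => (hm i).le) x₀)
  exact exists_isMinOn_of_isCompact_sublevel (isCompact_separatedSublevel hm σ _)
    (separatedSublevel_subset_chamber hm hC)
    (fun x hx => (differentiableAt_upot_add_inertia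
      (separatedSublevel_subset_chamber hm hC hx)).continuousAt.continuousWithinAt)
    hx₀ fun x hx => mem_separatedSublevel (fun i => (hm i).le) hx

end Configurations

/-- `W = U + I` has exactly one critical point in each component `Ω_σ`, and this
critical point is the unique global minimum of `W` on `Ω_σ`. -/
theorem unique_critical_point {N : ℕ} (m : Fin N → ℝ) (hm : ∀ i, 0 < m i)
    (σ : Equiv.Perm (Fin N)) :
    ∃ c : Fin N → ℝ, StrictMono (c ∘ σ) ∧
      fderiv ℝ (fun z => Upot m z + inertia m z) c = 0 ∧
      (∀ x : Fin N → ℝ, StrictMono (x ∘ σ) →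
        fderiv ℝ (fun z => Upot m z + inertia m z) x = 0 → x = c) ∧
      (∀ x : Fin N → ℝ, StrictMono (x ∘ σ) → x ≠ c →
        Upot m c + inertia m c < Upot m x + inertia m x) := by
  obtain ⟨c, hc, hmin⟩ := exists_isMinOn_upot_add_inertia hm σ
  have hW := strictConvexOn_upot_add_inertia hm σ
  have isMinOn_of_crit : ∀ x ∈ chamber σ, fderiv ℝ (fun z => Upot m z + inertia m z) x = 0 →
      IsMinOn (fun z => Upot m z + inertia m z) (chamber σ) x := fun x hx hcrit =>
    hW.convexOn.isMinOn_of_hasFDerivAt_eq_zero hx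
      (hcrit ▸ (differentiableAt_upot_add_inertia hx).hasFDerivAt)
  refine ⟨c, hc, (hmin.isLocalMin ((isOpen_chamber σ).mem_nhds hc)).fderiv_eq_zero,
    fun x hx hcrit => hW.eq_of_isMinOn (isMinOn_of_crit x hx hcrit) hmin hx hc,
    fun x hx hne => hW.lt_of_isMinOn hmin hc hx hne⟩
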